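/- arXiv:1809.08220 — 5 statements merged into one kernel-verified Lean document; each statement's English description precedes it below -/
import Mathlib

section
/- Let G be a graph, let S be a subset of vertices of the complementary prism G∘Ḡ, and let v₁v₂…v_k be a path in G with k ≥ 2. If the convex hull (in the geodetic convexity of G∘Ḡ) of S contains v₁ together with the matched copies v̄₂, …, v̄_k in Ḡ, then it also contains v_k. -/
open SimpleGraph

/-- The complementary prism `G ∘ Ḡ`: left copies (`Sum.inl`) form `G`,
right copies (`Sum.inr`) form the complement `Gᶜ`, and each `inl v` is
matched to `inr v`. -/
def compPrism {V : Type*} (G : SimpleGraph V) : SimpleGraph (V ⊕ V) where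
  Adj x y :=
    match x, y with
    | Sum.inl a, Sum.inl b => G.Adj a b
    | Sum.inr a, Sum.inr b => Gᶜ.Adj a b
    | Sum.inl a, Sum.inr b => a = b
    | Sum.inr a, Sum.inl b => a = b
  symm := by
    constructor
    rintro (a | a) (b | b) h <;> simp_all [compl_adj, adj_comm, eq_comm]
  loopless := by
    constructor
    rintro (a | a) h <;> simp_all

/-- `v` lies on some shortest `u`-`w` path in `G`. -/
def inInterval {V : Type*} (G : SimpleGraph V) (u w v : V) : Prop :=
  ∃ p : G.Walk u w, p.IsPath ∧ p.length = G.dist u w ∧ v ∈ p.support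

/-- A set is geodesically convex if it contains every vertex on any shortest
path between two of its vertices. -/
def IsGeodConvex {V : Type*} (G : SimpleGraph V) (S : Set V) : Prop :=
  ∀ u ∈ S, ∀ w ∈ S, ∀ v, inInterval G u w v → v ∈ S

/-- The geodesic convex hull of a set of vertices. -/
def geodHull {V : Type*} (G : SimpleGraph V) (S : Set V) : Set V :=
  ⋂₀ {T | S ⊆ T ∧ IsGeodConvex G T}

/-- The convexity number: the maximum cardinality of a proper convex set. -/
noncomputable def convexityNumber {V : Type*} (G : SimpleGraph V) : ℕ :=
  sSup {n | ∃ S : Set V, IsGeodConvex G S ∧ S ≠ Set.univ ∧ S.ncard = n}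

lemma inInterval_of_adj_of_adj {V : Type*} {G : SimpleGraph V} {u x w : V}
    (hux : G.Adj u x) (hxw : G.Adj x w) (huw : u ≠ w) (hnadj : ¬G.Adj u w) :
    inInterval G u w x := by
  have hdist : G.dist u w = 2 := by
    rw [SimpleGraph.dist, edist_eq_two_iff.mpr ⟨huw, hnadj, x, hux, hxw.symm⟩]
    rfl
  refine ⟨.cons hux (.cons hxw .nil), ?_, by simp [hdist], by simp⟩
  simp [Walk.isPath_def, huw, hux.ne, hxw.ne]

lemma geodHull_isGeodConvex {V : Type*} (G : SimpleGraph V) (S : Set V) :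
    IsGeodConvex G (geodHull G S) :=
  fun u hu w hw x hx _ hT ↦ hT.2 u (hu _ hT) w (hw _ hT) x hx

/-- For `a ≠ b`, the vertices `inl a` and `inr b` are not matched, so they are at distance two
with common neighbour `inl b`. -/
lemma inl_mem_geodHull_compPrism_of_adj {V : Type*} {G : SimpleGraph V} {S : Set (V ⊕ V)}
    {a b : V} (hab : G.Adj a b) (ha : Sum.inl a ∈ geodHull (compPrism G) S)
    (hb : Sum.inr b ∈ geodHull (compPrism G) S) :
    Sum.inl b ∈ geodHull (compPrism G) S :=
  geodHull_isGeodConvex _ _ _ ha _ hb _ <|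
    inInterval_of_adj_of_adj (G := compPrism G) hab rfl Sum.inl_ne_inr hab.ne

theorem stmt0 {V : Type*} (G : SimpleGraph V) (S : Set (V ⊕ V)) (k : ℕ) (hk : 2 ≤ k)
    (v : Fin k → V)
    (hpath : ∀ i : Fin k, ∀ h : i.val + 1 < k, G.Adj (v i) (v ⟨i.val + 1, h⟩))
    (h1 : Sum.inl (v ⟨0, by omega⟩) ∈ geodHull (compPrism G) S)
    (h2 : ∀ i : Fin k, 1 ≤ i.val → Sum.inr (v i) ∈ geodHull (compPrism G) S) :
    Sum.inl (v ⟨k - 1, by omega⟩) ∈ geodHull (compPrism G) S := by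
  have hprefix : ∀ n (hn : n < k), Sum.inl (v ⟨n, hn⟩) ∈ geodHull (compPrism G) S := by
    intro n
    induction n with
    | zero => exact fun _ ↦ h1
    | succ m ih =>
      intro hn
      exact inl_mem_geodHull_compPrism_of_adj (hpath ⟨m, by omega⟩ hn) (ih (by omega))
        (h2 ⟨m + 1, hn⟩ (by simp))
  exact hprefix (k - 1) (by omega)
end

section
/- Let G be a graph, let S be a convex set of the complementary prism G∘Ḡ in the geodetic convexity, and let S' = S ∩ V(Ḡ). If Ā denotes the open neighborhood of S' inside Ḡ (i.e., vertices of Ḡ \ S' adjacent in Ḡ to some vertex of S'), and A denotes the set of corresponding vertices in G, then S ∩ A = ∅. -/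
open SimpleGraph

/- The walk `inl a — inr a — inr b` is a geodesic of the complementary prism: `inl a` and `inr b`
are not matched since `a ≠ b`. Convexity of `S` then forces `inr a ∈ S`, contradicting `a ∉ S'`. -/

theorem SimpleGraph.dist_eq_two_of_adj_of_adj {V : Type*} {H : SimpleGraph V} {u x w : V}
    (hux : H.Adj u x) (hxw : H.Adj x w) (hne : u ≠ w) (hnadj : ¬ H.Adj u w) :
    H.dist u w = 2 := by
  have hedist : H.edist u w = 2 :=
    edist_eq_two_iff.mpr ⟨hne, hnadj, x, (mem_commonNeighbors H).mpr ⟨hux, hxw.symm⟩⟩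
  simp [SimpleGraph.dist, hedist]

theorem IsGeodConvex.mem_of_adj_of_adj {V : Type*} {H : SimpleGraph V} {S : Set V}
    (hS : IsGeodConvex H S) {u x w : V} (hu : u ∈ S) (hw : w ∈ S)
    (hux : H.Adj u x) (hxw : H.Adj x w) (hne : u ≠ w) (hnadj : ¬ H.Adj u w) : x ∈ S := by
  let p : H.Walk u w := .cons hux (.cons hxw .nil)
  have hp : p.IsPath := by simp [p, Walk.isPath_def, hux.ne, hxw.ne, hne]
  have hlen : p.length = H.dist u w := by
    simp [p, dist_eq_two_of_adj_of_adj hux hxw hne hnadj]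
  exact hS u hu w hw x ⟨p, hp, hlen, by simp [p]⟩

theorem stmt4 {V : Type*} (G : SimpleGraph V) (S : Set (V ⊕ V))
    (hS : IsGeodConvex (compPrism G) S)
    (S' : Set V) (hS' : S' = {a | Sum.inr a ∈ S})
    (A : Set V) (hA : A = {a | a ∉ S' ∧ ∃ b ∈ S', Gᶜ.Adj b a}) :
    ∀ a ∈ A, Sum.inl a ∉ S := by
  subst hS' hA
  rintro a ⟨haS', b, hbS', hba⟩ hinl
  have hab : a ≠ b := hba.ne.symm
  have hmatch : (compPrism G).Adj (Sum.inl a) (Sum.inr a) := rfl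
  have hnadj : ¬ (compPrism G).Adj (Sum.inl a) (Sum.inr b) := hab
  exact haS' (hS.mem_of_adj_of_adj hinl hbS' hmatch hba.symm Sum.inl_ne_inr hnadj)
end

section
/- Let G be a graph of order n with diameter at most 2. Then the set V(G), viewed inside the complementary prism G∘Ḡ, is a convex set of G∘Ḡ in the geodetic convexity; consequently con(G∘Ḡ) ≥ n. -/
open SimpleGraph

/-!
Since `G` embeds in `G ∘ Ḡ`, two vertices of the `G`-copy are at distance at most 2 in the
prism, so a shortest path between them has at most one inner vertex, a common neighbour. The
only edges between the two copies form the matching `inl c ~ inr c`, so a common neighbour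
`inr c` of `inl a` and `inl b` forces `a = c = b`.
-/

namespace SimpleGraph

theorem Reachable.dist_map_le {V W : Type*} {G : SimpleGraph V} {G' : SimpleGraph W}
    (f : G →g G') {u v : V} (h : G.Reachable u v) : G'.dist (f u) (f v) ≤ G.dist u v := by
  obtain ⟨p, hp⟩ := h.exists_walk_length_eq_dist
  simpa only [Walk.length_map, hp] using G'.dist_le (p.map f)

theorem Walk.mem_support_of_length_le_two {V : Type*} {G : SimpleGraph V} {u w v : V}
    {p : G.Walk u w} (hp : p.IsPath) (hlen : p.length ≤ 2) (hv : v ∈ p.support) :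
    v = u ∨ v = w ∨ (u ≠ w ∧ G.Adj u v ∧ G.Adj v w) := by
  match p, hp, hlen with
  | .nil, _, _ => simp_all
  | .cons _ .nil, _, _ =>
    simp only [Walk.support_cons, Walk.support_nil, List.mem_cons, List.not_mem_nil,
      or_false] at hv
    tauto
  | .cons h₁ (.cons h₂ .nil), hp, _ =>
    simp only [Walk.support_cons, Walk.support_nil, List.mem_cons, List.not_mem_nil,
      or_false] at hv
    have hne : u ≠ w := by
      have := hp.support_nodup
      simp_all
    rcases hv with rfl | rfl | rfl
    exacts [.inl rfl, .inr (.inr ⟨hne, h₁, h₂⟩), .inr (.inl rfl)]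
  | .cons _ (.cons _ (.cons _ _)), _, hlen => simp at hlen

theorem le_convexityNumber {V : Type*} [Finite V] {G : SimpleGraph V} {S : Set V}
    (hS : IsGeodConvex G S) (hS_ne : S ≠ Set.univ) : S.ncard ≤ convexityNumber G :=
  le_csSup ⟨Nat.card V, by rintro _ ⟨T, -, -, rfl⟩; exact Set.ncard_le_card T⟩ ⟨S, hS, hS_ne, rfl⟩

end SimpleGraph

section CompPrism

variable {V : Type*} (G : SimpleGraph V)

def compPrismInl : G →g compPrism G := ⟨Sum.inl, id⟩

variable {G}

theorem compPrism_dist_inl_le {a b : V} (h : G.Reachable a b) :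
    (compPrism G).dist (Sum.inl a) (Sum.inl b) ≤ G.dist a b :=
  h.dist_map_le (compPrismInl G)

theorem compPrism_mem_range_inl_of_adj_of_adj {a b : V} {x : V ⊕ V} (hab : a ≠ b)
    (ha : (compPrism G).Adj (Sum.inl a) x) (hb : (compPrism G).Adj x (Sum.inl b)) :
    x ∈ Set.range Sum.inl := by
  cases x with
  | inl c => exact ⟨c, rfl⟩
  | inr c => exact absurd ((ha : a = c).trans hb) hab

theorem compPrism_isGeodConvex_range_inl (hconn : G.Connected)
    (hdiam : ∀ u v : V, G.dist u v ≤ 2) :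
    IsGeodConvex (compPrism G) (Set.range Sum.inl) := by
  rintro _ ⟨a, rfl⟩ _ ⟨b, rfl⟩ v ⟨p, hp, hlen, hv⟩
  have hlen_le : p.length ≤ 2 := hlen ▸ (compPrism_dist_inl_le (hconn a b)).trans (hdiam a b)
  rcases p.mem_support_of_length_le_two hp hlen_le hv with rfl | rfl | ⟨hab, ha, hb⟩
  · exact ⟨a, rfl⟩
  · exact ⟨b, rfl⟩
  · exact compPrism_mem_range_inl_of_adj_of_adj (fun h => hab (congrArg Sum.inl h)) ha hb

end CompPrism

theorem stmt5 {V : Type*} [Fintype V] (G : SimpleGraph V) (hconn : G.Connected)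
    (hdiam : ∀ u v : V, G.dist u v ≤ 2) :
    IsGeodConvex (compPrism G) (Set.range Sum.inl) ∧
      Fintype.card V ≤ convexityNumber (compPrism G) := by
  have hconv := compPrism_isGeodConvex_range_inl hconn hdiam
  refine ⟨hconv, ?_⟩
  obtain ⟨v₀⟩ := hconn.nonempty
  have hproper : Set.range Sum.inl ≠ (Set.univ : Set (V ⊕ V)) :=
    Set.ne_univ_iff_exists_notMem _ |>.mpr ⟨Sum.inr v₀, by simp⟩
  calc Fintype.card V = (Set.range (Sum.inl : V → V ⊕ V)).ncard := by
        rw [Set.ncard_range_of_injective Sum.inl_injective, Nat.card_eq_fintype_card]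
    _ ≤ convexityNumber (compPrism G) := le_convexityNumber hconv hproper
end

section
/- Let G be a graph with a vertex v whose corresponding vertex v̄ in the complementary prism G∘Ḡ satisfies: v is an isolated vertex of G. Then v̄ together with all vertices of G∘Ḡ except v forms a convex set; in particular, if G has an isolated vertex then con(G∘Ḡ) = 2n − 1, where n is the order of G. -/
open SimpleGraph

/-!
A simplicial vertex `x` (one whose neighbours are pairwise adjacent) is never an interior vertex of
a geodesic: a walk `u - x - w` through it can be shortcut by the edge `u w` (or by dropping the
detour when `u = w`). Hence all vertices but `x` form a convex set, which is as large as a proper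
subset can be. In `G ∘ Ḡ` the copy of a vertex isolated in `G` has the single neighbour `v̄`, so it
is simplicial.
-/

namespace SimpleGraph

variable {V : Type*} {H : SimpleGraph V} {x : V}

theorem Walk.exists_length_lt_of_isClique_neighborSet (hx : H.IsClique (H.neighborSet x)) :
    ∀ {a b : V} (p : H.Walk a b), x ∈ p.support → a ≠ x → b ≠ x →
      ∃ q : H.Walk a b, q.length < p.length
  | _, _, .nil, hmem, ha, _ => (ha (List.mem_singleton.mp hmem).symm).elim
  | a, b, .cons (v := c) hac q, hmem, ha, hb => by
    by_cases hc : c = x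
    · subst hc
      cases q with
      | nil => exact (hb rfl).elim
      | @cons _ w _ hcw r =>
        by_cases haw : a = w
        · subst haw
          exact ⟨r, by simp⟩
        · exact ⟨.cons (hx hac.symm hcw haw) r, by simp⟩
    · have hxq : x ∈ q.support := by
        simpa [Ne.symm ha] using hmem
      obtain ⟨q', hq'⟩ := exists_length_lt_of_isClique_neighborSet hx q hxq hc hb
      exact ⟨.cons hac q', by simpa using hq'⟩

theorem isGeodConvex_ne_of_isClique_neighborSet (hx : H.IsClique (H.neighborSet x)) :
    IsGeodConvex H {y | y ≠ x} := by
  rintro a ha b hb y ⟨p, -, hp, hy⟩ rfl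
  obtain ⟨q, hq⟩ := p.exists_length_lt_of_isClique_neighborSet hx hy ha hb
  have := H.dist_le q
  omega

theorem convexityNumber_eq_card_sub_one [Finite V] (hx : IsGeodConvex H {y | y ≠ x}) :
    convexityNumber H = Nat.card V - 1 := by
  have hproper : {y | y ≠ x} ≠ Set.univ :=
    (Set.ne_univ_iff_exists_notMem _).mpr ⟨x, fun h => h rfl⟩
  refine IsGreatest.csSup_eq ⟨⟨{y | y ≠ x}, hx, hproper, ?_⟩, ?_⟩
  · rw [← Set.compl_singleton_eq, Set.ncard_compl, Set.ncard_singleton]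
  · rintro _ ⟨S, -, hS, rfl⟩
    have := Set.ncard_lt_ncard (Set.ssubset_univ_iff.mpr hS)
    rw [Set.ncard_univ] at this
    omega

end SimpleGraph

theorem compPrism_neighborSet_inl {V : Type*} {G : SimpleGraph V} {v : V}
    (hiso : ∀ u : V, ¬G.Adj v u) :
    (compPrism G).neighborSet (Sum.inl v) = {Sum.inr v} := by
  ext (u | u)
  · simpa [compPrism] using hiso u
  · simp [compPrism, eq_comm]

theorem stmt11 {V : Type*} [Fintype V] (G : SimpleGraph V) (v : V)
    (hiso : ∀ u : V, ¬G.Adj v u) :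
    IsGeodConvex (compPrism G) {x : V ⊕ V | x ≠ Sum.inl v} ∧
      convexityNumber (compPrism G) = 2 * Fintype.card V - 1 := by
  have hsimplicial : (compPrism G).IsClique ((compPrism G).neighborSet (Sum.inl v)) := by
    rw [compPrism_neighborSet_inl hiso]
    exact isClique_singleton _
  have hconv := isGeodConvex_ne_of_isClique_neighborSet hsimplicial
  refine ⟨hconv, ?_⟩
  rw [convexityNumber_eq_card_sub_one hconv, Nat.card_sum, Nat.card_eq_fintype_card, two_mul]
end

section
/- Let G be a disconnected graph with components G₁,…,G_ℓ (ℓ ≥ 2). In the complementary prism G∘Ḡ, for any two vertices u ∈ V(G_i) and v ∈ V(G_j) with i ≠ j, the matched vertices ū and v̄ lie on a shortest (u,v)-path; i.e., ū, v̄ ∈ I[u,v], where I[u,v] is the geodesic interval in G∘Ḡ. -/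
open SimpleGraph

/-
If `u` and `v` lie in different components of `G`, then `ū v̄` is an edge of `Ḡ`, so
`u ū v̄ v` is a `(u, v)`-path of length 3 in `G ∘ Ḡ`. No shorter path exists: an edge
`u v` or a common neighbour `w` of `u` and `v` inside `G` would connect them in `G`, and
the only neighbour of `u` outside `G` is `ū`, which is not adjacent to `v`. Hence the
path `u ū v̄ v` is geodesic and passes through both `ū` and `v̄`.
-/

namespace SimpleGraph

variable {V : Type*} {G : SimpleGraph V} {u v w : V}

@[simp] lemma compPrism_adj_inl_inl : (compPrism G).Adj (.inl u) (.inl v) ↔ G.Adj u v := .rfl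
@[simp] lemma compPrism_adj_inr_inr : (compPrism G).Adj (.inr u) (.inr v) ↔ Gᶜ.Adj u v := .rfl
@[simp] lemma compPrism_adj_inl_inr : (compPrism G).Adj (.inl u) (.inr v) ↔ u = v := .rfl
@[simp] lemma compPrism_adj_inr_inl : (compPrism G).Adj (.inr u) (.inl v) ↔ u = v := .rfl

lemma inInterval_of_length_eq_dist (p : G.Walk u w) (hp : p.length = G.dist u w)
    (hv : v ∈ p.support) : inInterval G u w v :=
  ⟨p, p.isPath_of_length_eq_dist hp, hp, hv⟩

lemma compl_adj_of_not_reachable (h : ¬ G.Reachable u v) : Gᶜ.Adj u v :=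
  ⟨fun huv => h (huv ▸ Reachable.refl u), fun hadj => h hadj.reachable⟩

def compPrismComplWalk (h : Gᶜ.Adj u v) : (compPrism G).Walk (.inl u) (.inl v) :=
  .cons (compPrism_adj_inl_inr.mpr rfl) <| .cons (compPrism_adj_inr_inr.mpr h) <|
    .cons (compPrism_adj_inr_inl.mpr rfl) .nil

@[simp]
lemma length_compPrismComplWalk (h : Gᶜ.Adj u v) : (compPrismComplWalk h).length = 3 := rfl

@[simp]
lemma support_compPrismComplWalk (h : Gᶜ.Adj u v) :
    (compPrismComplWalk h).support = [.inl u, .inr u, .inr v, .inl v] := rfl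

lemma three_le_length_of_not_reachable (h : ¬ G.Reachable u v) :
    ∀ p : (compPrism G).Walk (.inl u) (.inl v), 3 ≤ p.length
  | .nil => absurd (Reachable.refl u) h
  | .cons hadj .nil => absurd (compPrism_adj_inl_inl.mp hadj).reachable h
  | .cons (v := .inl _) h₁ (.cons h₂ .nil) =>
    absurd ((compPrism_adj_inl_inl.mp h₁).reachable.trans
      (compPrism_adj_inl_inl.mp h₂).reachable) h
  | .cons (v := .inr _) h₁ (.cons h₂ .nil) =>
    absurd ((compPrism_adj_inl_inr.mp h₁).trans (compPrism_adj_inr_inl.mp h₂) ▸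
      Reachable.refl u) h
  | .cons _ (.cons _ (.cons _ _)) => by simp

lemma compPrism_dist_inl_inl_of_not_reachable (h : ¬ G.Reachable u v) :
    (compPrism G).dist (.inl u) (.inl v) = 3 := by
  let q := compPrismComplWalk (compl_adj_of_not_reachable h)
  obtain ⟨p, hp⟩ := q.reachable.exists_walk_length_eq_dist
  exact le_antisymm (dist_le q) (hp ▸ three_le_length_of_not_reachable h p)

end SimpleGraph

theorem stmt12 {V : Type*} (G : SimpleGraph V) (u v : V)
    (h : G.connectedComponentMk u ≠ G.connectedComponentMk v) :
    inInterval (compPrism G) (Sum.inl u) (Sum.inl v) (Sum.inr u) ∧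
      inInterval (compPrism G) (Sum.inl u) (Sum.inl v) (Sum.inr v) := by
  have huv : ¬ G.Reachable u v := mt ConnectedComponent.sound h
  set p := compPrismComplWalk (compl_adj_of_not_reachable huv)
  have hp : p.length = (compPrism G).dist (Sum.inl u) (Sum.inl v) := by
    rw [compPrism_dist_inl_inl_of_not_reachable huv, length_compPrismComplWalk]
  exact ⟨inInterval_of_length_eq_dist p hp (by simp [p]),
    inInterval_of_length_eq_dist p hp (by simp [p])⟩
end
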